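/- Let W be the weighted left creation operators for positive weights {b_α}. For each i ∈ {1,…,n}, the operator W_i* W_i − ∑_{j=1}^n W_j W_j* is diagonal in the basis {e_α}: it maps e_α to (b_α/b_{g_iα} − b_γ/b_{g_pγ}) e_α whenever α = g_p γ, and e_{g_0} to (1/b_{g_i}) e_{g_0}. If moreover lim_{|γ|→∞} (b_{g_pγ}/b_{g_i g_p γ} − b_γ/b_{g_pγ}) = 0 for all p, then W_i* W_i − ∑_j W_j W_j* is a compact operator. -/

import Mathlib

/-!
The operators `W_i* W_i` and `∑ j, W_j W_j*` are both diagonal in the basis `e_α`: from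
`W_j e_α = √(b_α / b_{g_jα}) e_{g_jα}` one reads off `W_j* e_{g_pγ} = δ_{jp} √(b_γ / b_{g_pγ}) e_γ`
and `W_j* e_{g₀} = 0`. A diagonal operator on `ℓ²` whose eigenvalues tend to zero along the
cofinite filter is the norm limit of its finite truncations, which have finite rank, so it is
compact; along words, the cofinite filter is the filter of long words.
-/

open scoped ENNReal

noncomputable section

/-- Words over the alphabet `Fin n`: elements of the free monoid `F_n^+`. -/
abbrev Word (n : ℕ) := List (Fin n)

/-- The full Fock space `F²(H_n)`, with orthonormal basis indexed by words. -/
abbrev Fock (n : ℕ) := lp (fun _ : Word n => ℂ) 2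

/-- The basis vector `e_α` of the full Fock space. -/
def fockE {n : ℕ} (α : Word n) : Fock n := lp.single 2 α 1

open Filter Topology

theorem isCompactOperator_toSpanSingleton_comp_innerSL {𝕜 E : Type*} [RCLike 𝕜]
    [NormedAddCommGroup E] [InnerProductSpace 𝕜 E] (u v : E) :
    IsCompactOperator ((ContinuousLinearMap.toSpanSingleton 𝕜 v).comp (innerSL 𝕜 u)) :=
  (isCompactOperator_of_locallyCompactSpace_rng (ContinuousLinearMap.toSpanSingleton 𝕜 v)).comp_clm
    (innerSL 𝕜 u)

namespace lp

variable {ι 𝕜 : Type*} [RCLike 𝕜] [DecidableEq ι]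

theorem inner_single_one_left (a : ι) (f : lp (fun _ : ι => 𝕜) 2) :
    inner 𝕜 (lp.single 2 a (1 : 𝕜)) f = f a := by
  simp [lp.inner_single_left]

theorem single_one_apply (a b : ι) :
    (lp.single 2 a (1 : 𝕜) : lp (fun _ : ι => 𝕜) 2) b = if b = a then 1 else 0 := by
  rw [lp.single_apply]; split_ifs with h <;> simp [h]

theorem adjoint_apply (T : lp (fun _ : ι => 𝕜) 2 →L[𝕜] lp (fun _ : ι => 𝕜) 2)
    (g : lp (fun _ : ι => 𝕜) 2) (a : ι) :
    T.adjoint g a = inner 𝕜 (T (lp.single 2 a 1)) g := by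
  rw [← inner_single_one_left, ContinuousLinearMap.adjoint_inner_right]

variable {T : lp (fun _ : ι => 𝕜) 2 →L[𝕜] lp (fun _ : ι => 𝕜) 2} {μ : ι → 𝕜}

theorem adjoint_single_of_diagonal (hT : ∀ a, T (lp.single 2 a 1) = μ a • lp.single 2 a 1)
    (a : ι) : T.adjoint (lp.single 2 a 1) = (starRingEnd 𝕜 (μ a)) • lp.single 2 a 1 := by
  ext b
  rw [adjoint_apply, hT, inner_smul_left, inner_single_one_left]
  simp only [single_one_apply, lp.coeFn_smul, Pi.smul_apply, smul_eq_mul]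
  split_ifs with h <;> simp [h]

theorem apply_of_diagonal (hT : ∀ a, T (lp.single 2 a 1) = μ a • lp.single 2 a 1)
    (f : lp (fun _ : ι => 𝕜) 2) (a : ι) : T f a = μ a * f a := by
  rw [← inner_single_one_left, ← ContinuousLinearMap.adjoint_inner_left,
    adjoint_single_of_diagonal hT, inner_smul_left, inner_single_one_left, RCLike.conj_conj]

theorem opNorm_le_of_diagonal (hT : ∀ a, T (lp.single 2 a 1) = μ a • lp.single 2 a 1)
    {ε : ℝ} (hε : 0 ≤ ε) (hμ : ∀ a, ‖μ a‖ ≤ ε) : ‖T‖ ≤ ε := by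
  refine T.opNorm_le_bound hε fun f => ?_
  calc ‖T f‖ ≤ ‖(ε : 𝕜) • f‖ := lp.norm_mono two_ne_zero fun a => by
        rw [apply_of_diagonal hT, norm_mul, lp.coeFn_smul, Pi.smul_apply, norm_smul,
          RCLike.norm_ofReal, abs_of_nonneg hε]
        exact mul_le_mul_of_nonneg_right (hμ a) (norm_nonneg _)
    _ = ε * ‖f‖ := by rw [norm_smul, RCLike.norm_ofReal, abs_of_nonneg hε]

theorem isCompactOperator_of_diagonal (hT : ∀ a, T (lp.single 2 a 1) = μ a • lp.single 2 a 1)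
    (hμ : Tendsto μ cofinite (𝓝 0)) : IsCompactOperator T := by
  let e : ι → lp (fun _ : ι => 𝕜) 2 := fun a => lp.single 2 a 1
  let truncate : Finset ι → lp (fun _ : ι => 𝕜) 2 →L[𝕜] lp (fun _ : ι => 𝕜) 2 := fun s =>
    ∑ a ∈ s, μ a • (ContinuousLinearMap.toSpanSingleton 𝕜 (e a)).comp (innerSL 𝕜 (e a))
  have htruncate : ∀ s, IsCompactOperator (truncate s) := fun s =>
    (compactOperator _ _ _).sum_mem fun a _ =>
      (compactOperator _ _ _).smul_mem _ (isCompactOperator_toSpanSingleton_comp_innerSL _ _)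
  have hrest : ∀ s a, (T - truncate s) (e a) = (if a ∈ s then 0 else μ a) • e a := by
    intro s a
    simp only [truncate, e, sub_apply, sum_apply, smul_apply, ContinuousLinearMap.comp_apply,
      innerSL_apply_apply, inner_single_one_left, single_one_apply,
      ContinuousLinearMap.toSpanSingleton_apply, hT]
    by_cases ha : a ∈ s <;> simp [ha, ite_smul, Finset.sum_ite_eq']
  refine isCompactOperator_of_tendsto (l := atTop) (Metric.tendsto_nhds.2 fun ε hε => ?_)
    (Eventually.of_forall htruncate)
  have hlarge : {a | ε / 2 ≤ ‖μ a‖}.Finite := by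
    simpa using eventually_cofinite.1 (hμ.norm.eventually (gt_mem_nhds (by simpa using half_pos hε)))
  filter_upwards [eventually_ge_atTop hlarge.toFinset] with s hs
  rw [dist_comm, dist_eq_norm]
  refine (opNorm_le_of_diagonal (hrest s) (half_pos hε).le fun a => ?_).trans_lt (half_lt_self hε)
  split_ifs with ha
  · simpa using (half_pos hε).le
  · exact le_of_lt (not_le.1 fun h => ha (hs (hlarge.mem_toFinset.2 h)))

end lp

theorem List.tendsto_cofinite_nhds_zero_of_cons {α : Type*} [Finite α] {f : List α → ℝ}
    (h : ∀ ε : ℝ, 0 < ε → ∃ m : ℕ, ∀ (p : α) (γ : List α), m ≤ γ.length → |f (p :: γ)| < ε) :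
    Tendsto f cofinite (𝓝 0) := by
  refine Metric.tendsto_nhds.2 fun ε hε => ?_
  obtain ⟨m, hm⟩ := h ε hε
  refine eventually_cofinite.2 ((List.finite_length_le α m).subset ?_)
  rintro (_ | ⟨p, γ⟩) hfar
  · simp
  · have hshort : γ.length < m := not_le.1 fun hlong => hfar (by simpa using hm p γ hlong)
    simpa using hshort

def tailRatio {n : ℕ} (b : Word n → ℝ) : Word n → ℝ
  | [] => 0
  | p :: γ => b γ / b (p :: γ)

def IsWeightedCreation {n : ℕ} (b : Word n → ℝ) (W : Fin n → (Fock n →L[ℂ] Fock n)) : Prop :=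
  ∀ (i : Fin n) (α : Word n), W i (fockE α) = (Real.sqrt (b α / b (i :: α)) : ℂ) • fockE (i :: α)

section WeightedCreation

variable {n : ℕ} {b : Word n → ℝ} {W : Fin n → (Fock n →L[ℂ] Fock n)}

theorem fockE_apply (α β : Word n) : fockE β α = if α = β then 1 else 0 :=
  lp.single_one_apply β α

theorem inner_fockE_left (α : Word n) (f : Fock n) : inner ℂ (fockE α) f = f α :=
  lp.inner_single_one_left α f

theorem adjoint_apply_fockE_cons (hW : IsWeightedCreation b W) (j p : Fin n) (γ : Word n) :
    (W j).adjoint (fockE (p :: γ)) =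
      if j = p then (Real.sqrt (b γ / b (p :: γ)) : ℂ) • fockE γ else 0 := by
  ext α
  rw [← inner_fockE_left, ContinuousLinearMap.adjoint_inner_right, hW, inner_smul_left,
    inner_fockE_left, fockE_apply]
  by_cases hjp : j = p
  · subst hjp
    rw [if_pos rfl, lp.coeFn_smul, Pi.smul_apply, fockE_apply]
    by_cases hαγ : α = γ <;> simp [hαγ]
  · simp [hjp]

theorem adjoint_apply_fockE_nil (hW : IsWeightedCreation b W) (j : Fin n) : (W j).adjoint (fockE []) = 0 := by
  ext α
  rw [← inner_fockE_left, ContinuousLinearMap.adjoint_inner_right, hW, inner_smul_left,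
    inner_fockE_left, fockE_apply]
  simp

theorem adjoint_mul_self_apply_fockE (hb : ∀ α, 0 ≤ b α) (hW : IsWeightedCreation b W)
    (i : Fin n) (α : Word n) :
    ((W i).adjoint * W i) (fockE α) = ((b α / b (i :: α) : ℝ) : ℂ) • fockE α := by
  rw [mul_apply_eq_comp, hW, map_smul, adjoint_apply_fockE_cons hW, if_pos rfl,
    smul_smul, ← Complex.ofReal_mul, Real.mul_self_sqrt (div_nonneg (hb _) (hb _))]

theorem sum_mul_adjoint_apply_fockE (hb : ∀ α, 0 ≤ b α) (hW : IsWeightedCreation b W)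
    (α : Word n) :
    (∑ j, W j * (W j).adjoint) (fockE α) = ((tailRatio b α : ℝ) : ℂ) • fockE α := by
  rw [sum_apply]
  cases α with
  | nil => simp [adjoint_apply_fockE_nil hW, tailRatio]
  | cons p γ =>
    simp only [mul_apply_eq_comp, adjoint_apply_fockE_cons hW, apply_ite, map_smul, map_zero,
      Finset.sum_ite_eq', Finset.mem_univ, if_true]
    rw [hW, smul_smul, ← Complex.ofReal_mul, Real.mul_self_sqrt (div_nonneg (hb _) (hb _)),
      tailRatio]

end WeightedCreation

theorem stmt17_general {n : ℕ} (b : Word n → ℝ) (hbpos : ∀ α, 0 < b α) (hb0 : b [] = 1)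
    (W : Fin n → (Fock n →L[ℂ] Fock n))
    (hW : ∀ (i : Fin n) (α : Word n), W i (fockE α) =
      (Real.sqrt (b α / b (i :: α)) : ℂ) • fockE (i :: α))
    (i : Fin n) :
    (∀ (p : Fin n) (γ : Word n),
      (ContinuousLinearMap.adjoint (W i) * W i -
          ∑ j : Fin n, W j * ContinuousLinearMap.adjoint (W j)) (fockE (p :: γ)) =
        ((b (p :: γ) / b (i :: p :: γ) - b γ / b (p :: γ) : ℝ) : ℂ) • fockE (p :: γ)) ∧
    ((ContinuousLinearMap.adjoint (W i) * W i -
          ∑ j : Fin n, W j * ContinuousLinearMap.adjoint (W j)) (fockE ([] : Word n)) =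
        ((1 / b [i] : ℝ) : ℂ) • fockE ([] : Word n)) ∧
    ((∀ ε : ℝ, 0 < ε → ∃ m : ℕ, ∀ (p : Fin n) (γ : Word n), m ≤ γ.length →
        |b (p :: γ) / b (i :: p :: γ) - b γ / b (p :: γ)| < ε) →
      IsCompactOperator
        (ContinuousLinearMap.adjoint (W i) * W i -
          ∑ j : Fin n, W j * ContinuousLinearMap.adjoint (W j))) := by
  have hb : ∀ α, 0 ≤ b α := fun α => (hbpos α).le
  have hdiag : ∀ α : Word n, ((W i).adjoint * W i - ∑ j, W j * (W j).adjoint) (fockE α) =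
      ((b α / b (i :: α) - tailRatio b α : ℝ) : ℂ) • fockE α := fun α => by
    rw [sub_apply, adjoint_mul_self_apply_fockE hb hW, sum_mul_adjoint_apply_fockE hb hW,
      ← sub_smul, ← Complex.ofReal_sub]
  refine ⟨fun p γ => hdiag (p :: γ), by simpa [tailRatio, hb0] using hdiag [], fun hlim => ?_⟩
  have hsmall := (List.tendsto_cofinite_nhds_zero_of_cons
    (f := fun α => b α / b (i :: α) - tailRatio b α) hlim).ofReal
  exact lp.isCompactOperator_of_diagonal hdiag (Complex.ofReal_zero ▸ hsmall)

/-- for the weighted left creation operators `W` associated with positive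
weights `b` (with `b_{g₀}=1`), the operator `W_i*W_i − ∑_j W_jW_j*` is diagonal: it maps
`e_α` to `(b_α/b_{g_iα} − b_γ/b_{g_pγ}) e_α` when `α = g_p γ`, and `e_{g₀}` to
`(1/b_{g_i}) e_{g₀}`.  If moreover `b_{g_pγ}/b_{g_ig_pγ} − b_γ/b_{g_pγ} → 0` as
`|γ| → ∞`, uniformly over `p`, then `W_i*W_i − ∑_j W_jW_j*` is a compact operator. -/
theorem stmt17 {n : ℕ} (b : Word n → ℝ) (hbpos : ∀ α, 0 < b α) (hb0 : b [] = 1)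
    (hsup : ∀ i : Fin n, ∃ C : ℝ, ∀ α, b α / b (i :: α) ≤ C)
    (W : Fin n → (Fock n →L[ℂ] Fock n))
    (hW : ∀ (i : Fin n) (α : Word n), W i (fockE α) =
      (Real.sqrt (b α / b (i :: α)) : ℂ) • fockE (i :: α))
    (i : Fin n) :
    (∀ (p : Fin n) (γ : Word n),
      (ContinuousLinearMap.adjoint (W i) * W i -
          ∑ j : Fin n, W j * ContinuousLinearMap.adjoint (W j)) (fockE (p :: γ)) =
        ((b (p :: γ) / b (i :: p :: γ) - b γ / b (p :: γ) : ℝ) : ℂ) • fockE (p :: γ)) ∧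
    ((ContinuousLinearMap.adjoint (W i) * W i -
          ∑ j : Fin n, W j * ContinuousLinearMap.adjoint (W j)) (fockE ([] : Word n)) =
        ((1 / b [i] : ℝ) : ℂ) • fockE ([] : Word n)) ∧
    ((∀ ε : ℝ, 0 < ε → ∃ m : ℕ, ∀ (p : Fin n) (γ : Word n), m ≤ γ.length →
        |b (p :: γ) / b (i :: p :: γ) - b γ / b (p :: γ)| < ε) →
      IsCompactOperator
        (ContinuousLinearMap.adjoint (W i) * W i -
          ∑ j : Fin n, W j * ContinuousLinearMap.adjoint (W j))) :=
  stmt17_general b hbpos hb0 W hW i
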